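/- arXiv:0803.3850 — 7 statements merged into one kernel-verified Lean document; each statement's English description precedes it below -/
import Mathlib

section
/- For all S > 0, P(S) ≥ σ_w^2. -/
noncomputable def Pinf (a σw S : ℝ) : ℝ :=
  ((a^2 - 1) + σw^2 * S + Real.sqrt (((a^2 - 1) + σw^2 * S)^2 + 4 * σw^2 * S)) / (2 * S)

theorem le_larger_quadratic_root {A B C x : ℝ} (hA : 0 < A)
    (hx : A * x ^ 2 - B * x - C ≤ 0) :
    x ≤ (B + Real.sqrt (B ^ 2 + 4 * A * C)) / (2 * A) := by
  have hsq : (2 * A * x - B) ^ 2 ≤ B ^ 2 + 4 * A * C := by nlinarith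
  have hroot : 2 * A * x - B ≤ Real.sqrt (B ^ 2 + 4 * A * C) :=
    (le_abs_self _).trans (Real.abs_le_sqrt hsq)
  rw [le_div_iff₀ (by positivity)]
  linarith

/- `Pinf a σw S` is the larger root of `S P² - (a² - 1 + σw² S) P - σw²`, whose value at
`P = σw²` is `-a² σw² ≤ 0`. -/
theorem stmt_2_general (a σw : ℝ) :
    ∀ S : ℝ, 0 < S → σw^2 ≤ Pinf a σw S := by
  intro S hS
  have hval : S * (σw ^ 2) ^ 2 - ((a ^ 2 - 1) + σw ^ 2 * S) * σw ^ 2 - σw ^ 2 ≤ 0 := by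
    nlinarith [mul_nonneg (sq_nonneg a) (sq_nonneg σw)]
  have := le_larger_quadratic_root hS hval
  rwa [mul_right_comm 4 S] at this

theorem stmt_2 (a σw : ℝ) (hσw : 0 < σw) :
    ∀ S : ℝ, 0 < S → σw^2 ≤ Pinf a σw S :=
  stmt_2_general a σw
end

section
/- If |a| < 1, then for all S > 0, P(S) ≤ σ_w^2 / (1 - a^2). -/
lemma quadratic_larger_root_le {A B C V : ℝ} (hA : 0 < A) (h_vertex : B ≤ 2 * A * V)
    (h_nonneg : 0 ≤ A * V ^ 2 - B * V - C) :
    (B + √(B ^ 2 + 4 * A * C)) / (2 * A) ≤ V := by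
  have h_sqrt : √(B ^ 2 + 4 * A * C) ≤ 2 * A * V - B := by
    refine Real.sqrt_le_iff.mpr ⟨by linarith, ?_⟩
    nlinarith [mul_nonneg hA.le h_nonneg]
  rw [div_le_iff₀ (by positivity)]
  linarith

theorem stmt_3_general (a σw : ℝ) (ha : |a| < 1) :
    ∀ S : ℝ, 0 < S → Pinf a σw S ≤ σw^2 / (1 - a^2) := by
  intro S hS
  have h_gap : 0 < 1 - a ^ 2 := by
    rw [sub_pos, sq_lt_one_iff_abs_lt_one]
    exact ha
  set V := σw ^ 2 / (1 - a ^ 2)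
  have h_stationary : (1 - a ^ 2) * V = σw ^ 2 := mul_div_cancel₀ _ h_gap.ne'
  have h_noise_le : σw ^ 2 ≤ V :=
    le_div_self (sq_nonneg σw) h_gap (by linarith [sq_nonneg a])
  have h_root := quadratic_larger_root_le (B := (a ^ 2 - 1) + σw ^ 2 * S) (C := σw ^ 2)
    (V := V) hS (by nlinarith) (by nlinarith [mul_nonneg hS.le (sub_nonneg.mpr h_noise_le)])
  unfold Pinf
  convert h_root using 4
  ring

theorem stmt_3 (a σw : ℝ) (hσw : 0 < σw) (ha : |a| < 1) :
    ∀ S : ℝ, 0 < S → Pinf a σw S ≤ σw^2 / (1 - a^2) :=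
  stmt_3_general a σw ha
end

section
/- In the symmetric setting (α_i = α, c_i = c, σ_i^2 = σ_v^2, h_i = h for all i with α, h, c ≠ 0, σ_v^2 > 0, σ_n^2 ≥ 0), the multi-access SNR S = M^2 α^2 h^2 c^2 / (M α^2 h^2 σ_v^2 + σ_n^2) is greater than or equal to the orthogonal SNR S^o = M α^2 h^2 c^2 / (α^2 h^2 σ_v^2 + σ_n^2), with equality iff σ_n^2 = 0 or M = 1. -/
/-!
Write `g = α²h²c²` for the received signal power of one sensor, `x = α²h²σ_v²` for its received
observation-noise power and `n = σ_n²`. Then `S = M²g / (Mx + n)` and `S^o = Mg / (x + n)`, and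
`S - S^o = M g (M - 1) n / ((Mx + n)(x + n))`, which is nonnegative and vanishes exactly when
`n = 0` or `M = 1`.
-/

section SNRGain

variable {M g x n : ℝ}

theorem sq_mul_div_sub_mul_div (hMx : M * x + n ≠ 0) (hx : x + n ≠ 0) :
    M ^ 2 * g / (M * x + n) - M * g / (x + n) = M * g * (M - 1) * n / ((M * x + n) * (x + n)) := by
  field_simp
  ring

theorem mul_div_le_sq_mul_div (hM : 1 ≤ M) (hg : 0 ≤ g) (hx : 0 < x) (hn : 0 ≤ n) :
    M * g / (x + n) ≤ M ^ 2 * g / (M * x + n) := by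
  have hMx : 0 < M * x + n := by nlinarith
  have hxn : 0 < x + n := by linarith
  rw [← sub_nonneg, sq_mul_div_sub_mul_div hMx.ne' hxn.ne']
  have hM0 : 0 ≤ M - 1 := by linarith
  positivity

theorem sq_mul_div_eq_mul_div_iff (hM : 1 ≤ M) (hg : 0 < g) (hx : 0 < x) (hn : 0 ≤ n) :
    M ^ 2 * g / (M * x + n) = M * g / (x + n) ↔ n = 0 ∨ M = 1 := by
  have hMx : 0 < M * x + n := by nlinarith
  have hxn : 0 < x + n := by linarith
  rw [← sub_eq_zero, sq_mul_div_sub_mul_div hMx.ne' hxn.ne', div_eq_zero_iff,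
    or_iff_left (by positivity), mul_eq_zero, mul_eq_zero, sub_eq_zero,
    or_iff_right (mul_pos (by linarith) hg).ne']
  exact or_comm

end SNRGain

theorem stmt_6 (M : ℕ) (hM : 1 ≤ M) (α h c σv2 σn2 : ℝ)
    (hα : α ≠ 0) (hh : h ≠ 0) (hc : c ≠ 0) (hσv : 0 < σv2) (hσn : 0 ≤ σn2) :
    (M : ℝ) * α^2 * h^2 * c^2 / (α^2 * h^2 * σv2 + σn2) ≤
      (M : ℝ)^2 * α^2 * h^2 * c^2 / ((M : ℝ) * α^2 * h^2 * σv2 + σn2) ∧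
    ((M : ℝ)^2 * α^2 * h^2 * c^2 / ((M : ℝ) * α^2 * h^2 * σv2 + σn2) =
        (M : ℝ) * α^2 * h^2 * c^2 / (α^2 * h^2 * σv2 + σn2) ↔ σn2 = 0 ∨ M = 1) := by
  have hM' : (1 : ℝ) ≤ M := by exact_mod_cast hM
  have hg : 0 < α ^ 2 * h ^ 2 * c ^ 2 := by positivity
  have hx : 0 < α ^ 2 * h ^ 2 * σv2 := by positivity
  have hS : (M : ℝ) ^ 2 * α ^ 2 * h ^ 2 * c ^ 2 / ((M : ℝ) * α ^ 2 * h ^ 2 * σv2 + σn2) =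
      (M : ℝ) ^ 2 * (α ^ 2 * h ^ 2 * c ^ 2) / ((M : ℝ) * (α ^ 2 * h ^ 2 * σv2) + σn2) := by
    ring
  have hSo : (M : ℝ) * α ^ 2 * h ^ 2 * c ^ 2 / (α ^ 2 * h ^ 2 * σv2 + σn2) =
      (M : ℝ) * (α ^ 2 * h ^ 2 * c ^ 2) / (α ^ 2 * h ^ 2 * σv2 + σn2) := by
    ring
  rw [hS, hSo, ← Nat.cast_eq_one (R := ℝ)]
  exact ⟨mul_div_le_sq_mul_div hM' hg.le hx hσn, sq_mul_div_eq_mul_div_iff hM' hg hx hσn⟩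
end

section
/- (Symmetric multi-access asymptotics, unscaled.) With S(M) = M^2 h^2 c^2 / (M h^2 σ_v^2 + σ_n^2), the quantity M·(P(S(M)) − σ_w^2) converges to a^2 σ_v^2 / c^2 as M → ∞. Equivalently, P∞ = σ_w^2 + (a^2 σ_v^2/c^2)/M + O(1/M^2). -/
open Filter Topology

lemma add_sqrt_sq_add_eq_div {C D : ℝ} (hC : C < 0) (hD : 0 ≤ D) :
    C + √(C ^ 2 + D) = D / (√(C ^ 2 + D) - C) := by
  have hR : √(C ^ 2 + D) ^ 2 = C ^ 2 + D := Real.sq_sqrt (by positivity)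
  have hpos : 0 < √(C ^ 2 + D) - C := by linarith [Real.sqrt_nonneg (C ^ 2 + D)]
  rw [eq_div_iff hpos.ne']
  linear_combination hR

lemma Pinf_sub_sq_eq_div {a σw S : ℝ} (hS : 0 < S) (hC : a ^ 2 - 1 - σw ^ 2 * S < 0) :
    Pinf a σw S - σw ^ 2 = 2 * a ^ 2 * σw ^ 2 /
      (√((a ^ 2 - 1 - σw ^ 2 * S) ^ 2 + 4 * a ^ 2 * σw ^ 2 * S) - (a ^ 2 - 1 - σw ^ 2 * S)) := by
  have hdisc : ((a ^ 2 - 1) + σw ^ 2 * S) ^ 2 + 4 * σw ^ 2 * S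
      = (a ^ 2 - 1 - σw ^ 2 * S) ^ 2 + 4 * a ^ 2 * σw ^ 2 * S := by ring
  have hnum : (a ^ 2 - 1) + σw ^ 2 * S = (a ^ 2 - 1 - σw ^ 2 * S) + 2 * σw ^ 2 * S := by ring
  rw [Pinf, hdisc, hnum, add_right_comm, add_sqrt_sq_add_eq_div hC (by positivity)]
  field_simp
  ring

lemma mul_Pinf_sub_sq_eq {a σw S m : ℝ} (hm : 0 < m) (hS : 0 < S)
    (hC : a ^ 2 - 1 - σw ^ 2 * S < 0) :
    m * (Pinf a σw S - σw ^ 2) = 2 * a ^ 2 * σw ^ 2 /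
      (√(((a ^ 2 - 1) * m⁻¹ - σw ^ 2 * (S / m)) ^ 2 + 4 * a ^ 2 * σw ^ 2 * ((S / m) * m⁻¹))
        - ((a ^ 2 - 1) * m⁻¹ - σw ^ 2 * (S / m))) := by
  have hCm : (a ^ 2 - 1) * m⁻¹ - σw ^ 2 * (S / m) = (a ^ 2 - 1 - σw ^ 2 * S) / m := by ring
  have hsqrt : √(((a ^ 2 - 1 - σw ^ 2 * S) / m) ^ 2 + 4 * a ^ 2 * σw ^ 2 * ((S / m) * m⁻¹))
      = √((a ^ 2 - 1 - σw ^ 2 * S) ^ 2 + 4 * a ^ 2 * σw ^ 2 * S) / m := by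
    have hrad : ((a ^ 2 - 1 - σw ^ 2 * S) / m) ^ 2 + 4 * a ^ 2 * σw ^ 2 * ((S / m) * m⁻¹)
        = ((a ^ 2 - 1 - σw ^ 2 * S) ^ 2 + 4 * a ^ 2 * σw ^ 2 * S) / m ^ 2 := by
      field_simp
    rw [hrad, Real.sqrt_div' _ (sq_nonneg m), Real.sqrt_sq hm.le]
  rw [hCm, hsqrt, ← sub_div, div_div_eq_mul_div, Pinf_sub_sq_eq_div hS hC]
  ring

lemma tendsto_mul_Pinf_sub_sq {α : Type*} {l : Filter α} {m S : α → ℝ} {a σw L : ℝ}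
    (hσw : σw ≠ 0) (hL : 0 < L) (hm : Tendsto m l atTop)
    (hS : Tendsto (fun x ↦ S x / m x) l (𝓝 L)) :
    Tendsto (fun x ↦ m x * (Pinf a σw (S x) - σw ^ 2)) l (𝓝 (a ^ 2 / L)) := by
  have hinv : Tendsto (fun x ↦ (m x)⁻¹) l (𝓝 0) := tendsto_inv_atTop_zero.comp hm
  have hStop : Tendsto S l atTop := by
    refine (hm.atTop_mul_pos hL hS).congr' ?_
    filter_upwards [hm.eventually_gt_atTop 0] with x hx
    field_simp
  have hCm : Tendsto (fun x ↦ (a ^ 2 - 1) * (m x)⁻¹ - σw ^ 2 * (S x / m x)) l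
      (𝓝 (-(σw ^ 2 * L))) := by
    simpa using (hinv.const_mul (a ^ 2 - 1)).sub (hS.const_mul (σw ^ 2))
  have hRm : Tendsto (fun x ↦ √(((a ^ 2 - 1) * (m x)⁻¹ - σw ^ 2 * (S x / m x)) ^ 2
      + 4 * a ^ 2 * σw ^ 2 * ((S x / m x) * (m x)⁻¹))) l (𝓝 (σw ^ 2 * L)) := by
    have := ((hCm.pow 2).add ((hS.mul hinv).const_mul (4 * a ^ 2 * σw ^ 2))).sqrt
    simpa [Real.sqrt_sq (by positivity : 0 ≤ σw ^ 2 * L)] using this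
  have hlim := (tendsto_const_nhds (x := 2 * a ^ 2 * σw ^ 2)).div (hRm.sub hCm)
    (by rw [sub_neg_eq_add]; positivity)
  rw [show 2 * a ^ 2 * σw ^ 2 / (σw ^ 2 * L - -(σw ^ 2 * L)) = a ^ 2 / L by field_simp; ring]
    at hlim
  refine hlim.congr' ?_
  filter_upwards [hm.eventually_gt_atTop 0, hStop.eventually_gt_atTop 0,
    (hStop.const_mul_atTop (by positivity : 0 < σw ^ 2)).eventually_gt_atTop (a ^ 2 - 1)]
    with x hmx hSx hCx
  exact (mul_Pinf_sub_sq_eq hmx hSx (by linarith)).symm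

lemma tendsto_sq_div_linear_div_natCast {h c σv2 σn2 : ℝ} (hh : h ≠ 0) (hσv : σv2 ≠ 0) :
    Tendsto (fun M : ℕ ↦ (M : ℝ) ^ 2 * h ^ 2 * c ^ 2 / ((M : ℝ) * h ^ 2 * σv2 + σn2) / M)
      atTop (𝓝 (c ^ 2 / σv2)) := by
  have hne : h ^ 2 * σv2 ≠ 0 := mul_ne_zero (pow_ne_zero 2 hh) hσv
  have hden : Tendsto (fun M : ℕ ↦ h ^ 2 * σv2 + σn2 / M) atTop (𝓝 (h ^ 2 * σv2)) := by
    simpa using (tendsto_const_div_atTop_nhds_zero_nat σn2).const_add (h ^ 2 * σv2)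
  have hlim := (tendsto_const_nhds (x := h ^ 2 * c ^ 2)).div hden hne
  rw [mul_div_mul_left _ _ (pow_ne_zero 2 hh)] at hlim
  refine hlim.congr' ?_
  filter_upwards [eventually_gt_atTop 0, hden.eventually_ne hne] with M hM hdenM
  have hM : (M : ℝ) ≠ 0 := by positivity
  have hdenM' : (M : ℝ) * h ^ 2 * σv2 + σn2 ≠ 0 := by
    contrapose! hdenM
    field_simp
    linarith
  rw [Pi.div_apply]
  field_simp

theorem stmt_9_general (a σw h c σv2 σn2 : ℝ) (hσw : 0 < σw) (hh : h ≠ 0) (hc : c ≠ 0)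
    (hσv : 0 < σv2) :
    Filter.Tendsto
      (fun M : ℕ =>
        (M : ℝ) *
          (Pinf a σw ((M : ℝ)^2 * h^2 * c^2 / ((M : ℝ) * h^2 * σv2 + σn2)) - σw^2))
      Filter.atTop (nhds (a^2 * σv2 / c^2)) := by
  have hlim := tendsto_mul_Pinf_sub_sq (a := a) hσw.ne' (by positivity : 0 < c ^ 2 / σv2)
    tendsto_natCast_atTop_atTop (tendsto_sq_div_linear_div_natCast (σn2 := σn2) hh hσv.ne')
  rwa [div_div_eq_mul_div] at hlim

theorem stmt_9 (a σw h c σv2 σn2 : ℝ) (hσw : 0 < σw) (hh : h ≠ 0) (hc : c ≠ 0)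
    (hσv : 0 < σv2) (hσn : 0 ≤ σn2) :
    Filter.Tendsto
      (fun M : ℕ =>
        (M : ℝ) *
          (Pinf a σw ((M : ℝ)^2 * h^2 * c^2 / ((M : ℝ) * h^2 * σv2 + σn2)) - σw^2))
      Filter.atTop (nhds (a^2 * σv2 / c^2)) :=
  stmt_9_general a σw h c σv2 σn2 hσw hh hc hσv
end

section
/- (Symmetric orthogonal asymptotics, unscaled.) With S^o(M) = M h^2 c^2 / (h^2 σ_v^2 + σ_n^2), the quantity M·(P(S^o(M)) − σ_w^2) converges to a^2 (σ_v^2 + σ_n^2/h^2)/c^2 as M → ∞. -/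
/-!
With `t = σw² S`, the quantity `S (P(S) - σw²)` equals
`(a² - 1 + √((a² - 1 + t)² + 4t) - t) / 2`, and `√((d + t)² + 4t) - t → d + 2` for every `d`, so
`S (P(S) - σw²) → a²` as `S → ∞`. Since `S^o(M) = M / K` with `K = (h² σv² + σn²) / (h² c²)`,
the sequence `M (P(S^o(M)) - σw²)` tends to `K a²`.
-/

open Filter Topology

lemma tendsto_sqrt_sq_add_sub_atTop (d : ℝ) :
    Tendsto (fun t : ℝ => √((d + t) ^ 2 + 4 * t) - t) atTop (𝓝 (d + 2)) := by
  have hden : Tendsto (fun t : ℝ => √((d + t) ^ 2 + 4 * t) + (t + d + 2)) atTop atTop :=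
    (tendsto_atTop_add_const_right _ _
      (tendsto_atTop_add_const_right _ _ tendsto_id)).nonneg_add_atTop fun _ => Real.sqrt_nonneg _
  have hlim := (tendsto_const_nhds (x := d + 2)).sub
    ((tendsto_const_nhds (x := 4 * (d + 1))).div_atTop hden)
  rw [sub_zero] at hlim
  refine hlim.congr' ?_
  filter_upwards [eventually_ge_atTop (|d| + 1)] with t ht
  have hpos : 0 < t := by linarith [abs_nonneg d]
  have hsq : √((d + t) ^ 2 + 4 * t) ^ 2 = (d + t) ^ 2 + 4 * t := Real.sq_sqrt (by positivity)
  have hsum : 0 < √((d + t) ^ 2 + 4 * t) + (t + d + 2) := by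
    linarith [Real.sqrt_nonneg ((d + t) ^ 2 + 4 * t), neg_abs_le d]
  -- `(t + d + 2)² = (d + t)² + 4t + 4(d + 1)`: rationalize the difference
  field_simp
  nlinarith [hsq]

lemma mul_Pinf_sub_sq {S : ℝ} (a σw : ℝ) (hS : S ≠ 0) :
    S * (Pinf a σw S - σw ^ 2) =
      (a ^ 2 - 1 + (√((a ^ 2 - 1 + σw ^ 2 * S) ^ 2 + 4 * (σw ^ 2 * S)) - σw ^ 2 * S)) / 2 := by
  rw [Pinf, mul_assoc 4]
  field_simp
  ring

lemma tendsto_mul_Pinf_sub_sq_s10 (a : ℝ) {σw : ℝ} (hσw : σw ≠ 0) :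
    Tendsto (fun S : ℝ => S * (Pinf a σw S - σw ^ 2)) atTop (𝓝 (a ^ 2)) := by
  have ht : Tendsto (fun S : ℝ => σw ^ 2 * S) atTop atTop :=
    tendsto_id.const_mul_atTop (by positivity)
  have hlim := ((tendsto_const_nhds (x := a ^ 2 - 1)).add
    ((tendsto_sqrt_sq_add_sub_atTop (a ^ 2 - 1)).comp ht)).div_const 2
  rw [show (a ^ 2 - 1 + (a ^ 2 - 1 + 2)) / 2 = a ^ 2 by ring] at hlim
  refine hlim.congr' ?_
  filter_upwards [eventually_ne_atTop 0] with S hS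
  exact (mul_Pinf_sub_sq a σw hS).symm

theorem stmt_10 (a σw h c σv2 σn2 : ℝ) (hσw : 0 < σw) (hh : h ≠ 0) (hc : c ≠ 0)
    (hσv : 0 < σv2) (hσn : 0 ≤ σn2) :
    Filter.Tendsto
      (fun M : ℕ =>
        (M : ℝ) * (Pinf a σw ((M : ℝ) * h^2 * c^2 / (h^2 * σv2 + σn2)) - σw^2))
      Filter.atTop (nhds (a^2 * (σv2 + σn2 / h^2) / c^2)) := by
  have hD : 0 < h ^ 2 * σv2 + σn2 := by positivity
  have hhc : 0 < h ^ 2 * c ^ 2 := by positivity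
  set K := (h ^ 2 * σv2 + σn2) / (h ^ 2 * c ^ 2)
  have hS :
      Tendsto (fun M : ℕ => (M : ℝ) * h ^ 2 * c ^ 2 / (h ^ 2 * σv2 + σn2)) atTop atTop := by
    simp_rw [mul_assoc]
    exact (tendsto_natCast_atTop_atTop.atTop_mul_const hhc).atTop_div_const hD
  have hlim := ((tendsto_mul_Pinf_sub_sq_s10 a hσw.ne').comp hS).const_mul K
  rw [show K * a ^ 2 = a ^ 2 * (σv2 + σn2 / h ^ 2) / c ^ 2 by simp only [K]; field_simp] at hlim
  refine hlim.congr fun M => ?_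
  simp only [Function.comp_apply, K, ← mul_assoc]
  congr 1
  field_simp
end

section
/- (Symmetric orthogonal scheme with 1/√M scaling does not reach σ_w^2.) With S^o(M) = h^2 c^2 / (h^2 σ_v^2/M + σ_n^2), as M → ∞ the steady state error covariance P(S^o(M)) converges to P(h^2 c^2/σ_n^2), and this limit is strictly greater than σ_w^2 whenever σ_n^2 > 0. -/
open Filter Topology

lemma continuousAt_Pinf (a σw : ℝ) {S : ℝ} (hS : S ≠ 0) : ContinuousAt (Pinf a σw) S := by
  unfold Pinf
  exact ContinuousAt.div (by fun_prop) (by fun_prop) (by simpa using hS)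

/-- `Pinf a σw S` is the positive root of `S P² - (a² - 1 + σw² S) P - σw²`, and this quadratic
takes the value `-a² σw² < 0` at `P = σw²`. -/
lemma sq_lt_Pinf {a σw S : ℝ} (hσw : σw ≠ 0) (hS : 0 < S) (ha : a ≠ 0) :
    σw^2 < Pinf a σw S := by
  have hgap : ((a^2 - 1) + σw^2 * S)^2 + 4 * σw^2 * S - (σw^2 * S - (a^2 - 1))^2
      = 4 * (σw^2 * S * a^2) := by ring
  have hroot : σw^2 * S - (a^2 - 1) < √(((a^2 - 1) + σw^2 * S)^2 + 4 * σw^2 * S) :=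
    Real.lt_sqrt_of_sq_lt (by linarith [show 0 < σw^2 * S * a^2 by positivity])
  rw [Pinf, lt_div_iff₀ (by positivity)]
  linarith

lemma tendsto_div_div_natCast_add (x y : ℝ) {z : ℝ} (hz : z ≠ 0) :
    Tendsto (fun M : ℕ => x / (y / M + z)) atTop (𝓝 (x / z)) := by
  have hden : Tendsto (fun M : ℕ => y / M + z) atTop (𝓝 z) := by
    simpa using (tendsto_const_nhds.div_atTop tendsto_natCast_atTop_atTop).add_const z
  exact tendsto_const_nhds.div hden hz

theorem stmt_11_general (a σw h c σv2 σn2 : ℝ) (hσw : 0 < σw) (hh : h ≠ 0) (hc : c ≠ 0)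
    (hσn : 0 < σn2) :
    Filter.Tendsto
      (fun M : ℕ => Pinf a σw (h^2 * c^2 / (h^2 * σv2 / (M : ℝ) + σn2)))
      Filter.atTop (nhds (Pinf a σw (h^2 * c^2 / σn2))) ∧
    (a ≠ 0 → σw^2 < Pinf a σw (h^2 * c^2 / σn2)) := by
  have hS : 0 < h^2 * c^2 / σn2 := by positivity
  exact ⟨(continuousAt_Pinf a σw hS.ne').tendsto.comp
      (tendsto_div_div_natCast_add _ _ hσn.ne'),
    fun ha => sq_lt_Pinf hσw.ne' hS ha⟩

theorem stmt_11 (a σw h c σv2 σn2 : ℝ) (hσw : 0 < σw) (hh : h ≠ 0) (hc : c ≠ 0)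
    (hσv : 0 < σv2) (hσn : 0 < σn2) :
    Filter.Tendsto
      (fun M : ℕ => Pinf a σw (h^2 * c^2 / (h^2 * σv2 / (M : ℝ) + σn2)))
      Filter.atTop (nhds (Pinf a σw (h^2 * c^2 / σn2))) ∧
    (a ≠ 0 → σw^2 < Pinf a σw (h^2 * c^2 / σn2)) :=
  stmt_11_general a σw h c σv2 σn2 hσw hh hc hσn
end

section
/- (Feasibility condition.) The constraint set {(α_1,…,α_M) : (∑ α_i^2 τ_i + σ_n^2)·x ≤ (∑ α_i ρ_i)^2 · y} is nonempty if and only if ∑_{i=1}^M ρ_i^2/τ_i > x/y, given x, y, σ_n^2 > 0, τ_i > 0, ρ_i ∈ ℝ. -/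
/-!
By the weighted Cauchy–Schwarz inequality, `(∑ αᵢ ρᵢ)² ≤ (∑ αᵢ² τᵢ) · S` with `S = ∑ ρᵢ² / τᵢ`,
with equality along the ray `αᵢ = c ρᵢ / τᵢ`. Writing `A = ∑ αᵢ² τᵢ`, feasibility therefore
forces `σ² x ≤ A (S y - x)`, whence `x < S y`; conversely, if `x < S y`, the point of the ray
with `c² S (S y - x) = σ² x` is feasible.
-/

open Finset

section

variable {ι R : Type*} (s : Finset ι)

theorem sum_mul_div_sq_mul [Field R] {τ : ι → R} (hτ : ∀ i ∈ s, τ i ≠ 0) (c : R) (ρ : ι → R) :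
    ∑ i ∈ s, (c * (ρ i / τ i)) ^ 2 * τ i = c ^ 2 * ∑ i ∈ s, ρ i ^ 2 / τ i := by
  rw [mul_sum]
  refine sum_congr rfl fun i hi => ?_
  field_simp [hτ i hi]

theorem sum_mul_div_mul [Field R] (c : R) (τ ρ : ι → R) :
    ∑ i ∈ s, c * (ρ i / τ i) * ρ i = c * ∑ i ∈ s, ρ i ^ 2 / τ i := by
  rw [mul_sum]
  refine sum_congr rfl fun i _ => ?_
  ring

theorem sq_sum_mul_le_sum_sq_mul_mul_sum_sq_div [Field R] [LinearOrder R] [IsStrictOrderedRing R]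
    {τ : ι → R} (hτ : ∀ i ∈ s, 0 < τ i) (α ρ : ι → R) :
    (∑ i ∈ s, α i * ρ i) ^ 2 ≤ (∑ i ∈ s, α i ^ 2 * τ i) * ∑ i ∈ s, ρ i ^ 2 / τ i :=
  sum_sq_le_sum_mul_sum_of_sq_le_mul s
    (fun i hi => mul_nonneg (sq_nonneg _) (hτ i hi).le)
    (fun i hi => div_nonneg (sq_nonneg _) (hτ i hi).le)
    (fun i hi => by field_simp [(hτ i hi).ne']; rfl)

end

theorem stmt_15_general (M : ℕ) (x y σn2 : ℝ) (hx : 0 < x) (hy : 0 < y)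
    (hσn : 0 < σn2) (τ ρ : Fin M → ℝ) (hτ : ∀ i, 0 < τ i) :
    (∃ α : Fin M → ℝ,
        (∑ i, (α i)^2 * τ i + σn2) * x ≤ (∑ i, α i * ρ i)^2 * y) ↔
      x / y < ∑ i, (ρ i)^2 / τ i := by
  set S := ∑ i, ρ i ^ 2 / τ i
  rw [div_lt_iff₀ hy]
  constructor
  · rintro ⟨α, hα⟩
    set A := ∑ i, α i ^ 2 * τ i
    have hA : 0 ≤ A := sum_nonneg fun i _ => mul_nonneg (sq_nonneg _) (hτ i).le
    have hCS := sq_sum_mul_le_sum_sq_mul_mul_sum_sq_div univ (fun i _ => hτ i) α ρ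
    have hgap : σn2 * x ≤ A * (S * y - x) := by nlinarith
    linarith [pos_of_mul_pos_right ((mul_pos hσn hx).trans_le hgap) hA]
  · intro h
    have hS : 0 < S := pos_of_mul_pos_left (hx.trans h) hy.le
    set c := √(σn2 * x / (S * (S * y - x)))
    have hc : c ^ 2 * (S * (S * y - x)) = σn2 * x := by
      rw [Real.sq_sqrt (by positivity), div_mul_cancel₀ _ (by nlinarith)]
    refine ⟨fun i => c * (ρ i / τ i), ?_⟩
    rw [sum_mul_div_sq_mul univ (fun i _ => (hτ i).ne'), sum_mul_div_mul]
    linarith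

theorem stmt_15 (M : ℕ) (hM : 1 ≤ M) (x y σn2 : ℝ) (hx : 0 < x) (hy : 0 < y)
    (hσn : 0 < σn2) (τ ρ : Fin M → ℝ) (hτ : ∀ i, 0 < τ i) :
    (∃ α : Fin M → ℝ,
        (∑ i, (α i)^2 * τ i + σn2) * x ≤ (∑ i, α i * ρ i)^2 * y) ↔
      x / y < ∑ i, (ρ i)^2 / τ i :=
  stmt_15_general M x y σn2 hx hy hσn τ ρ hτ
end
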